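/- Under the stated assumptions, the binormal vector satisfies the evolution equation κ ∂_t B = −κ (∂_s v_B + τ v_N) T − (∂_s² v_B + ∂_s(τ v_N) + τ (∂_s v_N + κ v_T − τ v_B)) N. -/

import Mathlib

noncomputable section

open Real

/-- The cross product on `EuclideanSpace ℝ (Fin 3)`. -/
def cross3 (a b : EuclideanSpace ℝ (Fin 3)) : EuclideanSpace ℝ (Fin 3) :=
  (WithLp.equiv 2 (Fin 3 → ℝ)).symm
    ![a 1 * b 2 - a 2 * b 1, a 2 * b 0 - a 0 * b 2, a 0 * b 1 - a 1 * b 0]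

/-- Partial derivative with respect to the first (spatial) variable `u`. -/
def pu {α : Type*} [NormedAddCommGroup α] [NormedSpace ℝ α]
    (f : ℝ × ℝ → α) (p : ℝ × ℝ) : α :=
  deriv (fun u => f (u, p.2)) p.1

/-- Partial derivative with respect to the second (time) variable `t`. -/
def pt {α : Type*} [NormedAddCommGroup α] [NormedSpace ℝ α]
    (f : ℝ × ℝ → α) (p : ℝ × ℝ) : α :=
  deriv (fun t => f (p.1, t)) p.2

/-- Arc-length derivative `∂_s = g⁻¹ ∂_u` along the curves parametrized by `X`. -/
def Ds (X : ℝ × ℝ → EuclideanSpace ℝ (Fin 3)) {α : Type*}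
    [NormedAddCommGroup α] [NormedSpace ℝ α] (f : ℝ × ℝ → α) (p : ℝ × ℝ) : α :=
  ‖pu X p‖⁻¹ • pu f p

section Helpers
variable {α : Type*} [NormedAddCommGroup α] [NormedSpace ℝ α]

lemma hasDerivAt_slice_u {f : ℝ × ℝ → α} {p : ℝ × ℝ} (hf : DifferentiableAt ℝ f p) :
    HasDerivAt (fun u => f (u, p.2)) (fderiv ℝ f p (1, 0)) p.1 := by
  have h1 : HasDerivAt (fun u : ℝ => (u, p.2)) ((1:ℝ), (0:ℝ)) p.1 :=
    (hasDerivAt_id p.1).prodMk (hasDerivAt_const p.1 p.2)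
  have h2 : HasFDerivAt f (fderiv ℝ f p) (p.1, p.2) := by simpa using hf.hasFDerivAt
  simpa [Function.comp_def] using h2.comp_hasDerivAt p.1 h1

lemma hasDerivAt_slice_t {f : ℝ × ℝ → α} {p : ℝ × ℝ} (hf : DifferentiableAt ℝ f p) :
    HasDerivAt (fun t => f (p.1, t)) (fderiv ℝ f p (0, 1)) p.2 := by
  have h1 : HasDerivAt (fun t : ℝ => (p.1, t)) ((0:ℝ), (1:ℝ)) p.2 :=
    (hasDerivAt_const p.2 p.1).prodMk (hasDerivAt_id p.2)
  have h2 : HasFDerivAt f (fderiv ℝ f p) (p.1, p.2) := by simpa using hf.hasFDerivAt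
  simpa [Function.comp_def] using h2.comp_hasDerivAt p.2 h1

lemma pu_eq {f : ℝ × ℝ → α} {p : ℝ × ℝ} (hf : DifferentiableAt ℝ f p) :
    pu f p = fderiv ℝ f p (1, 0) := (hasDerivAt_slice_u hf).deriv

lemma pt_eq {f : ℝ × ℝ → α} {p : ℝ × ℝ} (hf : DifferentiableAt ℝ f p) :
    pt f p = fderiv ℝ f p (0, 1) := (hasDerivAt_slice_t hf).deriv

lemma hasDerivAt_pu {f : ℝ × ℝ → α} (hf : ContDiff ℝ (⊤ : ℕ∞) f) (p : ℝ × ℝ) :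
    HasDerivAt (fun u => f (u, p.2)) (pu f p) p.1 := by
  rw [pu_eq (hf.differentiable (by simp) p)]
  exact hasDerivAt_slice_u (hf.differentiable (by simp) p)

lemma hasDerivAt_pt {f : ℝ × ℝ → α} (hf : ContDiff ℝ (⊤ : ℕ∞) f) (p : ℝ × ℝ) :
    HasDerivAt (fun t => f (p.1, t)) (pt f p) p.2 := by
  rw [pt_eq (hf.differentiable (by simp) p)]
  exact hasDerivAt_slice_t (hf.differentiable (by simp) p)

lemma contDiff_pu {f : ℝ × ℝ → α} (hf : ContDiff ℝ (⊤ : ℕ∞) f) : ContDiff ℝ (⊤ : ℕ∞) (pu f) := by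
  have : pu f = fun p => fderiv ℝ f p (1, 0) :=
    funext fun p => pu_eq (hf.differentiable (by simp) p)
  rw [this]
  exact (hf.fderiv_right (by simp)).clm_apply contDiff_const

lemma contDiff_pt {f : ℝ × ℝ → α} (hf : ContDiff ℝ (⊤ : ℕ∞) f) : ContDiff ℝ (⊤ : ℕ∞) (pt f) := by
  have : pt f = fun p => fderiv ℝ f p (0, 1) :=
    funext fun p => pt_eq (hf.differentiable (by simp) p)
  rw [this]
  exact (hf.fderiv_right (by simp)).clm_apply contDiff_const

lemma pu_pt_comm {f : ℝ × ℝ → α} (hf : ContDiff ℝ (⊤ : ℕ∞) f) (p : ℝ × ℝ) :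
    pt (pu f) p = pu (pt f) p := by
  have hF : ContDiff ℝ (⊤ : ℕ∞) (fderiv ℝ f) := hf.fderiv_right (by simp)
  have hd : Differentiable ℝ f := hf.differentiable (by simp)
  have h1 : pu f = fun q => fderiv ℝ f q (1, 0) := funext fun q => pu_eq (hd q)
  have h2 : pt f = fun q => fderiv ℝ f q (0, 1) := funext fun q => pt_eq (hd q)
  have e1 : pt (pu f) p = (fderiv ℝ (fderiv ℝ f) p (0, 1)) (1, 0) := by
    rw [h1]
    have := ((hasDerivAt_pt hF p).clm_apply (hasDerivAt_const p.2 ((1:ℝ), (0:ℝ)))).deriv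
    show deriv (fun t => fderiv ℝ f (p.1, t) (1, 0)) p.2 = _
    rw [← pt_eq (hF.differentiable (by simp) p)]; simpa using this
  have e2 : pu (pt f) p = (fderiv ℝ (fderiv ℝ f) p (1, 0)) (0, 1) := by
    rw [h2]
    have := ((hasDerivAt_pu hF p).clm_apply (hasDerivAt_const p.1 ((0:ℝ), (1:ℝ)))).deriv
    show deriv (fun u => fderiv ℝ f (u, p.2) (0, 1)) p.1 = _
    rw [← pu_eq (hF.differentiable (by simp) p)]; simpa using this
  rw [e1, e2]
  exact second_derivative_symmetric (fun y => (hd y).hasFDerivAt)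
    ((hF.differentiable (by simp) p).hasFDerivAt) _ _

lemma pu_const (c : α) (p : ℝ × ℝ) : pu (fun _ => c) p = 0 := by simp [pu]
lemma pt_const (c : α) (p : ℝ × ℝ) : pt (fun _ => c) p = 0 := by simp [pt]

end Helpers

section InnerHelpers
open RealInnerProductSpace
variable {E : Type*} [NormedAddCommGroup E] [InnerProductSpace ℝ E]

lemma pu_inner {f h : ℝ × ℝ → E} (hf : ContDiff ℝ (⊤ : ℕ∞) f) (hh : ContDiff ℝ (⊤ : ℕ∞) h) (p : ℝ × ℝ) :
    pu (fun q => (⟪f q, h q⟫ : ℝ)) p = ⟪f p, pu h p⟫ + ⟪pu f p, h p⟫ :=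
  (HasDerivAt.inner ℝ (hasDerivAt_pu hf p) (hasDerivAt_pu hh p)).deriv

lemma pt_inner {f h : ℝ × ℝ → E} (hf : ContDiff ℝ (⊤ : ℕ∞) f) (hh : ContDiff ℝ (⊤ : ℕ∞) h) (p : ℝ × ℝ) :
    pt (fun q => (⟪f q, h q⟫ : ℝ)) p = ⟪f p, pt h p⟫ + ⟪pt f p, h p⟫ :=
  (HasDerivAt.inner ℝ (hasDerivAt_pt hf p) (hasDerivAt_pt hh p)).deriv

lemma pu_inner_const {f h : ℝ × ℝ → E} (hf : ContDiff ℝ (⊤ : ℕ∞) f) (hh : ContDiff ℝ (⊤ : ℕ∞) h)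
    (c : ℝ) (hc : ∀ q, (⟪f q, h q⟫ : ℝ) = c) (p : ℝ × ℝ) :
    ⟪f p, pu h p⟫ + ⟪pu f p, h p⟫ = 0 := by
  have h1 := pu_inner hf hh p
  rw [show (fun q => (⟪f q, h q⟫ : ℝ)) = fun _ => c from funext hc, pu_const] at h1
  exact h1.symm

lemma pt_inner_const {f h : ℝ × ℝ → E} (hf : ContDiff ℝ (⊤ : ℕ∞) f) (hh : ContDiff ℝ (⊤ : ℕ∞) h)
    (c : ℝ) (hc : ∀ q, (⟪f q, h q⟫ : ℝ) = c) (p : ℝ × ℝ) :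
    ⟪f p, pt h p⟫ + ⟪pt f p, h p⟫ = 0 := by
  have h1 := pt_inner hf hh p
  rw [show (fun q => (⟪f q, h q⟫ : ℝ)) = fun _ => c from funext hc, pt_const] at h1
  exact h1.symm

end InnerHelpers

section Cross
open RealInnerProductSpace
local notation "E3" => EuclideanSpace ℝ (Fin 3)

lemma inner3 (x y : E3) : ⟪x, y⟫ = x 0 * y 0 + x 1 * y 1 + x 2 * y 2 := by
  simp [PiLp.inner_apply, Fin.sum_univ_three, mul_comm]

lemma cross3_apply0 (a b : E3) : cross3 a b 0 = a 1 * b 2 - a 2 * b 1 := rfl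
lemma cross3_apply1 (a b : E3) : cross3 a b 1 = a 2 * b 0 - a 0 * b 2 := rfl
lemma cross3_apply2 (a b : E3) : cross3 a b 2 = a 0 * b 1 - a 1 * b 0 := rfl

lemma contDiff_cross3 {f g : ℝ × ℝ → E3} (hf : ContDiff ℝ (⊤ : ℕ∞) f) (hg : ContDiff ℝ (⊤ : ℕ∞) g) :
    ContDiff ℝ (⊤ : ℕ∞) (fun p => cross3 (f p) (g p)) := by
  have hfi := contDiff_euclidean.mp hf
  have hgi := contDiff_euclidean.mp hg
  refine contDiff_euclidean.mpr fun i => ?_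
  fin_cases i
  · exact ((hfi 1).mul (hgi 2)).sub ((hfi 2).mul (hgi 1))
  · exact ((hfi 2).mul (hgi 0)).sub ((hfi 0).mul (hgi 2))
  · exact ((hfi 0).mul (hgi 1)).sub ((hfi 1).mul (hgi 0))

lemma inner_cross3_left (t n : E3) : ⟪cross3 t n, t⟫ = 0 := by
  simp only [inner3, cross3_apply0, cross3_apply1, cross3_apply2]; ring

lemma inner_cross3_right (t n : E3) : ⟪cross3 t n, n⟫ = 0 := by
  simp only [inner3, cross3_apply0, cross3_apply1, cross3_apply2]; ring

lemma inner_cross3_self (t n : E3) (htt : ⟪t, t⟫ = 1) (hnn : ⟪n, n⟫ = 1)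
    (htn : ⟪t, n⟫ = 0) : ⟪cross3 t n, cross3 t n⟫ = 1 := by
  simp only [inner3, cross3_apply0, cross3_apply1, cross3_apply2] at *
  linear_combination (n 0 ^ 2 + n 1 ^ 2 + n 2 ^ 2) * htt + hnn
    - (t 0 * n 0 + t 1 * n 1 + t 2 * n 2) * htn

lemma frame_decomp (t n b w : E3) (htt : ⟪t, t⟫ = 1) (hnn : ⟪n, n⟫ = 1)
    (htn : ⟪t, n⟫ = 0) (hb : b = cross3 t n) :
    w = ⟪w, t⟫ • t + ⟪w, n⟫ • n + ⟪w, b⟫ • b := by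
  have hbt : ⟪b, t⟫ = 0 := hb ▸ inner_cross3_left t n
  have hbn : ⟪b, n⟫ = 0 := hb ▸ inner_cross3_right t n
  have hbb : ⟪b, b⟫ = 1 := hb ▸ inner_cross3_self t n htt hnn htn
  simp only [inner3] at htt hnn htn hbt hbn hbb
  set M : Matrix (Fin 3) (Fin 3) ℝ :=
    Matrix.of ![![t 0, t 1, t 2], ![n 0, n 1, n 2], ![b 0, b 1, b 2]] with hM
  set P : Matrix (Fin 3) (Fin 3) ℝ :=
    Matrix.of ![![t 0, n 0, b 0], ![t 1, n 1, b 1], ![t 2, n 2, b 2]] with hP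
  have h1 : M * P = 1 := by
    ext i j
    fin_cases i <;> fin_cases j <;>
        simp [hM, hP, Matrix.mul_apply, Fin.sum_univ_three, Matrix.one_apply]
    · linear_combination htt
    · linear_combination htn
    · linear_combination hbt
    · linear_combination htn
    · linear_combination hnn
    · linear_combination hbn
    · linear_combination hbt
    · linear_combination hbn
    · linear_combination hbb
  have h2 : P * M = 1 := mul_eq_one_comm.mp h1
  have c : ∀ i j : Fin 3, (P * M) i j = (1 : Matrix (Fin 3) (Fin 3) ℝ) i j := fun i j => by
    rw [h2]
  have c00 : t 0 * t 0 + n 0 * n 0 + b 0 * b 0 = 1 := by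
    simpa [hM, hP, Matrix.mul_apply, Fin.sum_univ_three, Matrix.one_apply] using c 0 0
  have c01 : t 0 * t 1 + n 0 * n 1 + b 0 * b 1 = 0 := by
    simpa [hM, hP, Matrix.mul_apply, Fin.sum_univ_three, Matrix.one_apply] using c 0 1
  have c02 : t 0 * t 2 + n 0 * n 2 + b 0 * b 2 = 0 := by
    simpa [hM, hP, Matrix.mul_apply, Fin.sum_univ_three, Matrix.one_apply] using c 0 2
  have c11 : t 1 * t 1 + n 1 * n 1 + b 1 * b 1 = 1 := by
    simpa [hM, hP, Matrix.mul_apply, Fin.sum_univ_three, Matrix.one_apply] using c 1 1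
  have c12 : t 1 * t 2 + n 1 * n 2 + b 1 * b 2 = 0 := by
    simpa [hM, hP, Matrix.mul_apply, Fin.sum_univ_three, Matrix.one_apply] using c 1 2
  have c22 : t 2 * t 2 + n 2 * n 2 + b 2 * b 2 = 1 := by
    simpa [hM, hP, Matrix.mul_apply, Fin.sum_univ_three, Matrix.one_apply] using c 2 2
  have key0 : w 0 = ⟪w, t⟫ * t 0 + ⟪w, n⟫ * n 0 + ⟪w, b⟫ * b 0 := by
    rw [inner3, inner3, inner3]
    linear_combination (-w 0) * c00 - w 1 * c01 - w 2 * c02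
  have key1 : w 1 = ⟪w, t⟫ * t 1 + ⟪w, n⟫ * n 1 + ⟪w, b⟫ * b 1 := by
    rw [inner3, inner3, inner3]
    linear_combination (-w 0) * c01 - w 1 * c11 - w 2 * c12
  have key2 : w 2 = ⟪w, t⟫ * t 2 + ⟪w, n⟫ * n 2 + ⟪w, b⟫ * b 2 := by
    rw [inner3, inner3, inner3]
    linear_combination (-w 0) * c02 - w 1 * c12 - w 2 * c22
  ext i
  fin_cases i
  · exact key0
  · exact key1
  · exact key2

lemma contDiff_Ds {α : Type*} [NormedAddCommGroup α] [NormedSpace ℝ α]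
    {X : ℝ × ℝ → E3} {f : ℝ × ℝ → α} (hX : ContDiff ℝ (⊤ : ℕ∞) X)
    (h0 : ∀ p, pu X p ≠ 0) (hf : ContDiff ℝ (⊤ : ℕ∞) f) : ContDiff ℝ (⊤ : ℕ∞) (Ds X f) := by
  have : Ds X f = fun p => (‖pu X p‖)⁻¹ • pu f p := rfl
  rw [this]
  exact (((contDiff_pu hX).norm ℝ h0).inv
    (fun p => norm_ne_zero_iff.mpr (h0 p))).smul (contDiff_pu hf)

lemma pu_eq_smul_Ds {α : Type*} [NormedAddCommGroup α] [NormedSpace ℝ α]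
    (X : ℝ × ℝ → E3) (f : ℝ × ℝ → α) (p : ℝ × ℝ) (h : ‖pu X p‖ ≠ 0) :
    pu f p = ‖pu X p‖ • Ds X f p := by
  rw [Ds, smul_smul, mul_inv_cancel₀ h, one_smul]

end Cross

open RealInnerProductSpace

set_option maxHeartbeats 2000000

theorem binormal_evolution
    (X : ℝ × ℝ → EuclideanSpace ℝ (Fin 3)) (vN vB vT : ℝ × ℝ → ℝ)
    (g κ τ : ℝ × ℝ → ℝ) (T N B : ℝ × ℝ → EuclideanSpace ℝ (Fin 3))
    (hX : ContDiff ℝ (⊤ : ℕ∞) X) (hXper : ∀ u t : ℝ, X (u + 1, t) = X (u, t))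
    (hvN : ContDiff ℝ (⊤ : ℕ∞) vN) (hvNper : ∀ u t : ℝ, vN (u + 1, t) = vN (u, t))
    (hvB : ContDiff ℝ (⊤ : ℕ∞) vB) (hvBper : ∀ u t : ℝ, vB (u + 1, t) = vB (u, t))
    (hvT : ContDiff ℝ (⊤ : ℕ∞) vT) (hvTper : ∀ u t : ℝ, vT (u + 1, t) = vT (u, t))
    (hg : ∀ p : ℝ × ℝ, g p = ‖pu X p‖) (hgpos : ∀ p : ℝ × ℝ, 0 < g p)
    (hT : ∀ p : ℝ × ℝ, T p = Ds X X p)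
    (hκ : ∀ p : ℝ × ℝ, κ p = ‖Ds X T p‖) (hκpos : ∀ p : ℝ × ℝ, 0 < κ p)
    (hN : ∀ p : ℝ × ℝ, N p = (κ p)⁻¹ • Ds X T p)
    (hB : ∀ p : ℝ × ℝ, B p = cross3 (T p) (N p))
    (hτ : ∀ p : ℝ × ℝ, τ p = -(inner ℝ (Ds X B p) (N p) : ℝ))
    (hflow : ∀ p : ℝ × ℝ, pt X p = vN p • N p + vB p • B p + vT p • T p) :
    ∀ p : ℝ × ℝ,
      κ p • pt B p =
        (-(κ p * (Ds X vB p + τ p * vN p))) • T p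
        - (Ds X (Ds X vB) p + Ds X (fun q => τ q * vN q) p
            + τ p * (Ds X vN p + κ p * vT p - τ p * vB p)) • N p := by
  -- nonvanishing
  have hgne : ∀ p, g p ≠ 0 := fun p => (hgpos p).ne'
  have hYn0 : ∀ p, ‖pu X p‖ ≠ 0 := fun p => by rw [← hg p]; exact hgne p
  have hY0 : ∀ p, pu X p ≠ 0 := fun p => norm_ne_zero_iff.mp (hYn0 p)
  have hκne : ∀ p, κ p ≠ 0 := fun p => (hκpos p).ne'
  -- smoothness
  have hpuX : ContDiff ℝ (⊤ : ℕ∞) (pu X) := contDiff_pu hX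
  have hgC : ContDiff ℝ (⊤ : ℕ∞) g := by
    rw [funext hg]; exact hpuX.norm ℝ hY0
  have hTC : ContDiff ℝ (⊤ : ℕ∞) T := by
    rw [funext hT]; exact contDiff_Ds hX hY0 hX
  have hDsTC : ContDiff ℝ (⊤ : ℕ∞) (Ds X T) := contDiff_Ds hX hY0 hTC
  have hDsT0 : ∀ p, Ds X T p ≠ 0 := fun p => by
    intro h
    have := hκpos p
    rw [hκ p, h, norm_zero] at this
    exact lt_irrefl 0 this
  have hκC : ContDiff ℝ (⊤ : ℕ∞) κ := by
    rw [funext hκ]; exact hDsTC.norm ℝ hDsT0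
  have hNC : ContDiff ℝ (⊤ : ℕ∞) N := by
    rw [funext hN]; exact (hκC.inv hκne).smul hDsTC
  have hBC : ContDiff ℝ (⊤ : ℕ∞) B := by
    rw [funext hB]; exact contDiff_cross3 hTC hNC
  have hDsBC : ContDiff ℝ (⊤ : ℕ∞) (Ds X B) := contDiff_Ds hX hY0 hBC
  have hτC : ContDiff ℝ (⊤ : ℕ∞) τ := by
    rw [funext hτ]
    exact (hDsBC.inner ℝ hNC).neg
  -- pu in terms of Ds
  have puDsV : ∀ (f : ℝ × ℝ → EuclideanSpace ℝ (Fin 3)) p, pu f p = g p • Ds X f p :=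
    fun f p => by rw [hg p]; exact pu_eq_smul_Ds X f p (hYn0 p)
  have puDsR : ∀ (f : ℝ × ℝ → ℝ) p, pu f p = g p * Ds X f p :=
    fun f p => by rw [hg p]; exact pu_eq_smul_Ds X f p (hYn0 p)
  -- Frenet: Ds T = κ N,  pu T = (gκ) N
  have hDsT : ∀ p, Ds X T p = κ p • N p := fun p => by
    rw [hN p, smul_inv_smul₀ (hκne p)]
  have puT : ∀ p, pu T p = (g p * κ p) • N p := fun p => by
    rw [puDsV T p, hDsT p, smul_smul]
  -- unit norms
  have hTT : ∀ p, (⟪T p, T p⟫ : ℝ) = 1 := fun p => by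
    have hn : ‖T p‖ = 1 := by
      rw [hT p]
      show ‖‖pu X p‖⁻¹ • pu X p‖ = 1
      rw [norm_smul, norm_inv, norm_norm, inv_mul_cancel₀ (hYn0 p)]
    rw [real_inner_self_eq_norm_mul_norm, hn, mul_one]
  have hNN : ∀ p, (⟪N p, N p⟫ : ℝ) = 1 := fun p => by
    have hn : ‖N p‖ = 1 := by
      rw [hN p, norm_smul, norm_inv, Real.norm_eq_abs, abs_of_pos (hκpos p), ← hκ p,
        inv_mul_cancel₀ (hκne p)]
    rw [real_inner_self_eq_norm_mul_norm, hn, mul_one]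
  -- T ⟂ N
  have puTT : ∀ p, (⟪pu T p, T p⟫ : ℝ) = 0 := fun p => by
    have h := pu_inner_const hTC hTC 1 hTT p
    have hcomm := real_inner_comm (T p) (pu T p)
    linarith
  have hNT : ∀ p, (⟪N p, T p⟫ : ℝ) = 0 := fun p => by
    have h := puTT p
    rw [puT p, real_inner_smul_left] at h
    have hne : g p * κ p ≠ 0 := mul_ne_zero (hgne p) (hκne p)
    exact (mul_eq_zero.mp h).resolve_left hne
  have hTN : ∀ p, (⟪T p, N p⟫ : ℝ) = 0 := fun p => by
    rw [real_inner_comm]; exact hNT p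
  -- B inner products
  have hBT : ∀ p, (⟪B p, T p⟫ : ℝ) = 0 := fun p => hB p ▸ inner_cross3_left (T p) (N p)
  have hBN : ∀ p, (⟪B p, N p⟫ : ℝ) = 0 := fun p => hB p ▸ inner_cross3_right (T p) (N p)
  have hBB : ∀ p, (⟪B p, B p⟫ : ℝ) = 1 := fun p =>
    hB p ▸ inner_cross3_self (T p) (N p) (hTT p) (hNN p) (hTN p)
  have hTB : ∀ p, (⟪T p, B p⟫ : ℝ) = 0 := fun p => by rw [real_inner_comm]; exact hBT p
  have hNB : ∀ p, (⟪N p, B p⟫ : ℝ) = 0 := fun p => by rw [real_inner_comm]; exact hBN p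
  -- Frenet: Ds B = -τ N
  have DsB : ∀ p, Ds X B p = (-τ p) • N p := by
    intro p
    have hdec := frame_decomp (T p) (N p) (B p) (Ds X B p) (hTT p) (hNN p) (hTN p) (hB p)
    have i1 : (⟪Ds X B p, T p⟫ : ℝ) = 0 := by
      have h1 := pu_inner_const hBC hTC 0 hBT p
      rw [puT p, real_inner_smul_right, hBN p, mul_zero, zero_add] at h1
      rw [Ds, real_inner_smul_left, h1, mul_zero]
    have i2 : (⟪Ds X B p, N p⟫ : ℝ) = -τ p := by
      have := hτ p; linarith
    have i3 : (⟪Ds X B p, B p⟫ : ℝ) = 0 := by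
      have h1 := pu_inner_const hBC hBC 1 hBB p
      have hcomm := real_inner_comm (B p) (pu B p)
      have h2 : (⟪pu B p, B p⟫ : ℝ) = 0 := by linarith
      rw [Ds, real_inner_smul_left, h2, mul_zero]
    rw [i1, i2, i3] at hdec
    rw [hdec]
    module
  have puB : ∀ p, pu B p = (g p * (-τ p)) • N p := fun p => by
    rw [puDsV B p, DsB p, smul_smul]
  -- Frenet: Ds N = -κ T + τ B
  have DsN : ∀ p, Ds X N p = (-κ p) • T p + τ p • B p := by
    intro p
    have hdec := frame_decomp (T p) (N p) (B p) (Ds X N p) (hTT p) (hNN p) (hTN p) (hB p)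
    have i1 : (⟪Ds X N p, T p⟫ : ℝ) = -κ p := by
      have h1 := pu_inner_const hNC hTC 0 hNT p
      rw [puT p, real_inner_smul_right, hNN p, mul_one] at h1
      have h2 : (⟪pu N p, T p⟫ : ℝ) = -(g p * κ p) := by linarith
      rw [Ds, real_inner_smul_left, h2, ← hg p]
      field_simp [hgne p]
    have i2 : (⟪Ds X N p, N p⟫ : ℝ) = 0 := by
      have h1 := pu_inner_const hNC hNC 1 hNN p
      have hcomm := real_inner_comm (N p) (pu N p)
      have h2 : (⟪pu N p, N p⟫ : ℝ) = 0 := by linarith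
      rw [Ds, real_inner_smul_left, h2, mul_zero]
    have i3 : (⟪Ds X N p, B p⟫ : ℝ) = τ p := by
      have h1 := pu_inner_const hNC hBC 0 hNB p
      rw [puB p, real_inner_smul_right, hNN p, mul_one] at h1
      have h2 : (⟪pu N p, B p⟫ : ℝ) = g p * τ p := by linarith
      rw [Ds, real_inner_smul_left, h2, ← hg p]
      field_simp [hgne p]
    rw [i1, i2, i3] at hdec
    rw [hdec]
    module
  have puN : ∀ p, pu N p = g p • ((-κ p) • T p + τ p • B p) := fun p => by
    rw [puDsV N p, DsN p]
  -- smoothness of coefficient functions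
  have haC : ContDiff ℝ (⊤ : ℕ∞) (fun q => Ds X vN q + κ q * vT q - τ q * vB q) :=
    ((contDiff_Ds hX hY0 hvN).add (hκC.mul hvT)).sub (hτC.mul hvB)
  have hbC : ContDiff ℝ (⊤ : ℕ∞) (fun q => Ds X vB q + τ q * vN q) :=
    (contDiff_Ds hX hY0 hvB).add (hτC.mul hvN)
  -- arc-length derivative of the velocity field
  have puptX : ∀ p, pu (pt X) p
      = g p • ((Ds X vT p - κ p * vN p) • T p
        + (Ds X vN p + κ p * vT p - τ p * vB p) • N p
        + (Ds X vB p + τ p * vN p) • B p) := by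
    intro p
    have e0 : pu (pt X) p = pu (fun q => vN q • N q + vB q • B q + vT q • T q) p := by
      rw [funext hflow]
    have e1 : pu (fun q => vN q • N q + vB q • B q + vT q • T q) p
        = (vN p • pu N p + pu vN p • N p) + (vB p • pu B p + pu vB p • B p)
          + (vT p • pu T p + pu vT p • T p) := by
      have h := (((hasDerivAt_pu hvN p).smul (hasDerivAt_pu hNC p)).add
        ((hasDerivAt_pu hvB p).smul (hasDerivAt_pu hBC p))).add
        ((hasDerivAt_pu hvT p).smul (hasDerivAt_pu hTC p))
      exact h.deriv
    rw [e0, e1, puN p, puB p, puT p, puDsR vN p, puDsR vB p, puDsR vT p]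
    module
  -- pu X = g • T
  have puXeq : ∀ p, pu X p = g p • T p := fun p => by
    rw [hT p]; exact puDsV X p
  have ptTT : ∀ p, (⟪pt T p, T p⟫ : ℝ) = 0 := fun p => by
    have h := pt_inner_const hTC hTC 1 hTT p
    have hcomm := real_inner_comm (T p) (pt T p)
    linarith
  -- mixed second derivative of X
  have hmain : ∀ p, g p • pt T p + pt g p • T p
      = g p • ((Ds X vT p - κ p * vN p) • T p
        + (Ds X vN p + κ p * vT p - τ p * vB p) • N p
        + (Ds X vB p + τ p * vN p) • B p) := by
    intro p
    have e2 : pt (pu X) p = g p • pt T p + pt g p • T p := by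
      rw [funext puXeq]
      exact ((hasDerivAt_pt hgC p).smul (hasDerivAt_pt hTC p)).deriv
    rw [← e2, pu_pt_comm hX p]
    exact puptX p
  have ptg : ∀ p, pt g p = g p * (Ds X vT p - κ p * vN p) := by
    intro p
    have h := congrArg (fun w : EuclideanSpace ℝ (Fin 3) => (⟪w, T p⟫ : ℝ)) (hmain p)
    simp only [inner_add_left, real_inner_smul_left, hTT p, hNT p, hBT p, ptTT p] at h
    linear_combination h
  -- evolution of the tangent
  have ptT : ∀ p, pt T p = (Ds X vN p + κ p * vT p - τ p * vB p) • N p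
      + (Ds X vB p + τ p * vN p) • B p := by
    intro p
    have h4 := hmain p
    rw [ptg p] at h4
    have h5 : g p • pt T p
        = g p • ((Ds X vN p + κ p * vT p - τ p * vB p) • N p
          + (Ds X vB p + τ p * vN p) • B p) := by
      linear_combination (norm := module) h4
    exact smul_right_injective (EuclideanSpace ℝ (Fin 3)) (hgne p) h5
  -- now fix p
  intro p
  set c : ℝ := (⟪pt N p, B p⟫ : ℝ) with hc_def
  -- mixed second derivative of T, inner with B
  have e3 : pt (pu T) p = (g p * κ p) • pt N p + pt (fun q => g q * κ q) p • N p := by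
    rw [funext puT]
    exact ((hasDerivAt_pt (hgC.mul hκC) p).smul (hasDerivAt_pt hNC p)).deriv
  have e4 : pu (pt T) p
      = ((Ds X vN p + κ p * vT p - τ p * vB p) • pu N p
          + pu (fun q => Ds X vN q + κ q * vT q - τ q * vB q) p • N p)
        + ((Ds X vB p + τ p * vN p) • pu B p
          + pu (fun q => Ds X vB q + τ q * vN q) p • B p) := by
    rw [funext ptT]
    exact (((hasDerivAt_pu haC p).smul (hasDerivAt_pu hNC p)).add
      ((hasDerivAt_pu hbC p).smul (hasDerivAt_pu hBC p))).deriv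
  have E9 : (g p * κ p) • pt N p + pt (fun q => g q * κ q) p • N p
      = ((Ds X vN p + κ p * vT p - τ p * vB p) • pu N p
          + pu (fun q => Ds X vN q + κ q * vT q - τ q * vB q) p • N p)
        + ((Ds X vB p + τ p * vN p) • pu B p
          + pu (fun q => Ds X vB q + τ q * vN q) p • B p) := by
    rw [← e3, ← e4, pu_pt_comm hTC p]
  rw [puN p, puB p] at E9
  have e6 : pu (fun q => Ds X vB q + τ q * vN q) p
      = g p * Ds X (Ds X vB) p + g p * Ds X (fun q => τ q * vN q) p := by
    have h := ((hasDerivAt_pu (contDiff_Ds hX hY0 hvB) p).add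
      (hasDerivAt_pu (hτC.mul hvN) p)).deriv
    have h2 : pu (fun q => Ds X vB q + τ q * vN q) p
        = pu (Ds X vB) p + pu (fun q => τ q * vN q) p := by exact h
    rw [h2, puDsR (Ds X vB) p, puDsR (fun q => τ q * vN q) p]
  rw [e6] at E9
  have h9 := congrArg (fun w : EuclideanSpace ℝ (Fin 3) => (⟪w, B p⟫ : ℝ)) E9
  simp only [inner_add_left, real_inner_smul_left, hTB p, hNB p, hBB p, ← hc_def] at h9
  have hc : κ p * c = τ p * (Ds X vN p + κ p * vT p - τ p * vB p)
      + (Ds X (Ds X vB) p + Ds X (fun q => τ q * vN q) p) := by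
    apply mul_left_cancel₀ (hgne p)
    linear_combination h9
  -- decomposition of pt B
  have ptBB : (⟪pt B p, B p⟫ : ℝ) = 0 := by
    have h := pt_inner_const hBC hBC 1 hBB p
    have hcomm := real_inner_comm (B p) (pt B p)
    linarith
  have ptBT : (⟪pt B p, T p⟫ : ℝ) = -(Ds X vB p + τ p * vN p) := by
    have h := pt_inner_const hBC hTC 0 hBT p
    rw [ptT p] at h
    simp only [inner_add_right, real_inner_smul_right, hBN p, hBB p] at h
    linarith
  have ptBN : (⟪pt B p, N p⟫ : ℝ) = -c := by
    have h := pt_inner_const hBC hNC 0 hBN p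
    have hcomm := real_inner_comm (B p) (pt N p)
    linarith [hc_def, hcomm, h]
  have hdec := frame_decomp (T p) (N p) (B p) (pt B p) (hTT p) (hNN p) (hTN p) (hB p)
  rw [ptBT, ptBN, ptBB] at hdec
  rw [hdec]
  match_scalars
  · ring
  · linear_combination -hc
  · ring
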